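/- There is a bijection between palindromic oscillating tableaux of length 2n with height bounded by 1 and palindromic vacillating tableaux of length 2n with height bounded by 1; consequently both sets have cardinality C(n, ⌊n/2⌋). -/
import Mathlib


/-- A palindromic oscillating tableau of length `2n` with height bounded by 1. -/
def IsPalOscTab (n : ℕ) (μ : Fin (2 * n + 1) → ℕ) : Prop :=
  μ ⟨0, by omega⟩ = 0 ∧ μ ⟨2 * n, by omega⟩ = 0 ∧
  (∀ j : ℕ, (h : j < 2 * n) →
    μ ⟨j + 1, by omega⟩ = μ ⟨j, by omega⟩ + 1 ∨ μ ⟨j + 1, by omega⟩ + 1 = μ ⟨j, by omega⟩) ∧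
  (∀ j : ℕ, (h : j ≤ 2 * n) → μ ⟨j, by omega⟩ = μ ⟨2 * n - j, by omega⟩)

/-- A palindromic vacillating tableau of length `2n` with height bounded by 1. -/
def IsPalVacTab (n : ℕ) (ν : Fin (2 * n + 1) → ℕ) : Prop :=
  ν ⟨0, by omega⟩ = 0 ∧ ν ⟨2 * n, by omega⟩ = 0 ∧
  (∀ j : ℕ, (h : j < 2 * n) →
    if Even j then
      ν ⟨j + 1, by omega⟩ = ν ⟨j, by omega⟩ ∨ ν ⟨j + 1, by omega⟩ + 1 = ν ⟨j, by omega⟩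
    else
      ν ⟨j + 1, by omega⟩ = ν ⟨j, by omega⟩ ∨ ν ⟨j + 1, by omega⟩ = ν ⟨j, by omega⟩ + 1) ∧
  (∀ j : ℕ, (h : j ≤ 2 * n) → ν ⟨j, by omega⟩ = ν ⟨2 * n - j, by omega⟩)

namespace Stmt5Aux


def pathHt (s : ℕ → Bool) : ℕ → ℤ
  | 0 => 0
  | j + 1 => pathHt s j + (if s j then 1 else -1)

lemma pathHt_congr {s t : ℕ → Bool} : ∀ {j : ℕ}, (∀ i < j, s i = t i) →
    pathHt s j = pathHt t j
  | 0, _ => rfl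
  | j + 1, h => by
      have h1 : pathHt s j = pathHt t j :=
        pathHt_congr (fun i hi => h i (Nat.lt_succ_of_lt hi))
      simp only [pathHt, h1, h j (Nat.lt_succ_self j)]

lemma pathHt_le (s : ℕ → Bool) : ∀ j : ℕ, pathHt s j ≤ j
  | 0 => le_refl 0
  | j + 1 => by
      have := pathHt_le s j
      simp only [pathHt]
      split <;> push_cast <;> omega

def ex {n : ℕ} (s : Fin n → Bool) : ℕ → Bool :=
  fun i => if h : i < n then s ⟨i, h⟩ else false

def OkP (n : ℕ) (s : ℕ → Bool) : Prop := ∀ j ≤ n, 0 ≤ pathHt s j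

open Classical in
noncomputable def Dk (n k : ℕ) : Finset (Fin n → Bool) :=
  Finset.univ.filter (fun s => OkP n (ex s) ∧ pathHt (ex s) n = (k : ℤ))

open Classical in
noncomputable def Tot (n : ℕ) : Finset (Fin n → Bool) :=
  Finset.univ.filter (fun s => OkP n (ex s))

def g (n k : ℕ) : ℕ := if 2 ∣ (n - k) ∧ k ≤ n then n.choose ((n - k) / 2) else 0

def c (n k : ℕ) : ℤ := (g n k : ℤ) - g n (k + 2)

lemma g_succ_succ (n k : ℕ) : g (n + 1) (k + 1) = g n k + g n (k + 2) := by
  unfold g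
  by_cases h1 : 2 ∣ (n - k) ∧ k ≤ n
  · obtain ⟨⟨m, hm⟩, hk⟩ := h1
    have hcond : 2 ∣ (n + 1 - (k + 1)) ∧ k + 1 ≤ n + 1 := ⟨⟨m, by omega⟩, by omega⟩
    rw [if_pos hcond, if_pos ⟨⟨m, hm⟩, hk⟩]
    have e1 : (n + 1 - (k + 1)) / 2 = m := by omega
    have e2 : (n - k) / 2 = m := by omega
    rw [e1, e2]
    rcases Nat.eq_zero_or_pos m with hm0 | hm0
    · subst hm0
      have : ¬ (2 ∣ (n - (k + 2)) ∧ k + 2 ≤ n) := by omega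
      rw [if_neg this]
      simp
    · obtain ⟨m', rfl⟩ : ∃ m', m = m' + 1 := ⟨m - 1, by omega⟩
      have : 2 ∣ (n - (k + 2)) ∧ k + 2 ≤ n := ⟨⟨m', by omega⟩, by omega⟩
      rw [if_pos this]
      have e3 : (n - (k + 2)) / 2 = m' := by omega
      rw [e3, Nat.choose_succ_succ]
      simp only [Nat.succ_eq_add_one]
      omega
  · have h2 : ¬ (2 ∣ (n + 1 - (k + 1)) ∧ k + 1 ≤ n + 1) := by
      intro ⟨hd, hle⟩; exact h1 ⟨by omega, by omega⟩
    have h3 : ¬ (2 ∣ (n - (k + 2)) ∧ k + 2 ≤ n) := by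
      intro ⟨hd, hle⟩; exact h1 ⟨by omega, by omega⟩
    rw [if_neg h2, if_neg h1, if_neg h3]

lemma c_succ_succ (n k : ℕ) : c (n + 1) (k + 1) = c n k + c n (k + 2) := by
  unfold c
  have h1 := g_succ_succ n k
  have h2 := g_succ_succ n (k + 2)
  push_cast [h1, h2]
  ring

lemma c_succ_zero (n : ℕ) : c (n + 1) 0 = c n 1 := by
  unfold c g
  rcases Nat.even_or_odd n with ⟨m, rfl⟩ | ⟨m, rfl⟩
  · -- n = 2m even: everything 0
    have h1 : ¬ (2 ∣ (m + m + 1 - 0) ∧ 0 ≤ m + m + 1) := by omega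
    have h2 : ¬ (2 ∣ (m + m + 1 - 2) ∧ 2 ≤ m + m + 1) := by omega
    have h3 : ¬ (2 ∣ (m + m - 1) ∧ 1 ≤ m + m) := by omega
    have h4 : ¬ (2 ∣ (m + m - 3) ∧ 3 ≤ m + m) := by omega
    rw [if_neg h1, if_neg h2, if_neg h3, if_neg h4]
  · -- n = 2m+1 odd
    have h1 : 2 ∣ (2 * m + 1 + 1 - 0) ∧ 0 ≤ 2 * m + 1 + 1 := by omega
    have h2 : 2 ∣ (2 * m + 1 + 1 - 2) ∧ 2 ≤ 2 * m + 1 + 1 := by omega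
    have h3 : 2 ∣ (2 * m + 1 - 1) ∧ 1 ≤ 2 * m + 1 := by omega
    rw [if_pos h1, if_pos h2, if_pos h3]
    have e1 : (2 * m + 1 + 1 - 0) / 2 = m + 1 := by omega
    have e2 : (2 * m + 1 + 1 - 2) / 2 = m := by omega
    have e3 : (2 * m + 1 - 1) / 2 = m := by omega
    rw [e1, e2, e3]
    rcases Nat.eq_zero_or_pos m with rfl | hm
    · have h4 : ¬ (2 ∣ (2 * 0 + 1 - 3) ∧ 3 ≤ 2 * 0 + 1) := by omega
      rw [if_neg h4]
      simp
    · obtain ⟨m', rfl⟩ : ∃ m', m = m' + 1 := ⟨m - 1, by omega⟩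
      have h4 : 2 ∣ (2 * (m' + 1) + 1 - 3) ∧ 3 ≤ 2 * (m' + 1) + 1 := ⟨⟨m', by omega⟩, by omega⟩
      rw [if_pos h4]
      have e4 : (2 * (m' + 1) + 1 - 3) / 2 = m' := by omega
      rw [e4]
      have p1 : (2 * (m' + 1) + 1 + 1).choose (m' + 1 + 1)
          = (2 * (m' + 1) + 1).choose (m' + 1) + (2 * (m' + 1) + 1).choose (m' + 1 + 1) := by
        rw [Nat.choose_succ_succ]
      have p2 : (2 * (m' + 1) + 1 + 1).choose (m' + 1)
          = (2 * (m' + 1) + 1).choose m' + (2 * (m' + 1) + 1).choose (m' + 1) := by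
        rw [Nat.choose_succ_succ]
      have psymm : (2 * (m' + 1) + 1).choose (m' + 1 + 1) = (2 * (m' + 1) + 1).choose (m' + 1) := by
        have := Nat.choose_symm (n := 2 * (m' + 1) + 1) (k := m' + 1 + 1) (by omega)
        have e : 2 * (m' + 1) + 1 - (m' + 1 + 1) = m' + 1 := by omega
        rw [e] at this
        omega
    -- goal: cast arithmetic
      have h5 : 2 * (m' + 1) + 2 = 2 * (m' + 1) + 1 + 1 := by omega
      rw [h5] at *
      push_cast
      omega


lemma ex_snoc_lt {n : ℕ} (s : Fin n → Bool) (b : Bool) {i : ℕ} (h : i < n) :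
    ex (Fin.snoc s b) i = ex s i := by
  unfold ex
  rw [dif_pos (by omega : i < n + 1), dif_pos h]
  have e : (⟨i, by omega⟩ : Fin (n + 1)) = Fin.castSucc ⟨i, h⟩ := rfl
  rw [e, Fin.snoc_castSucc]

lemma ex_snoc_last {n : ℕ} (s : Fin n → Bool) (b : Bool) :
    ex (Fin.snoc s b) n = b := by
  unfold ex
  rw [dif_pos (by omega : n < n + 1)]
  have e : (⟨n, by omega⟩ : Fin (n + 1)) = Fin.last n := rfl
  rw [e, Fin.snoc_last]

lemma pathHt_ex_snoc {n : ℕ} (s : Fin n → Bool) (b : Bool) {j : ℕ} (hj : j ≤ n) :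
    pathHt (ex (Fin.snoc s b)) j = pathHt (ex s) j :=
  pathHt_congr (fun i hi => ex_snoc_lt s b (by omega))

lemma pathHt_ex_snoc_top {n : ℕ} (s : Fin n → Bool) (b : Bool) :
    pathHt (ex (Fin.snoc s b)) (n + 1) = pathHt (ex s) n + (if b then 1 else -1) := by
  show pathHt (ex (Fin.snoc s b)) n + _ = _
  rw [pathHt_ex_snoc s b (le_refl n), ex_snoc_last]

lemma okP_snoc_iff {n : ℕ} (s : Fin n → Bool) (b : Bool) :
    OkP (n + 1) (ex (Fin.snoc s b)) ↔
      OkP n (ex s) ∧ 0 ≤ pathHt (ex s) n + (if b then 1 else -1) := by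
  constructor
  · intro h
    refine ⟨fun j hj => ?_, ?_⟩
    · rw [← pathHt_ex_snoc s b hj]; exact h j (by omega)
    · rw [← pathHt_ex_snoc_top s b]; exact h (n + 1) (le_refl _)
  · rintro ⟨h1, h2⟩ j hj
    rcases Nat.lt_or_ge j (n + 1) with hj' | hj'
    · rw [pathHt_ex_snoc s b (by omega)]; exact h1 j (by omega)
    · have : j = n + 1 := by omega
      subst this
      rw [pathHt_ex_snoc_top s b]; exact h2

lemma snoc_false_mem_Dk_iff {n k : ℕ} (s : Fin n → Bool) :
    Fin.snoc s false ∈ Dk (n + 1) k ↔ s ∈ Dk n (k + 1) := by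
  simp only [Dk, Finset.mem_filter, Finset.mem_univ, true_and]
  rw [okP_snoc_iff, pathHt_ex_snoc_top]
  have hif : (if (false : Bool) then (1 : ℤ) else -1) = -1 := rfl
  rw [hif]
  constructor
  · rintro ⟨⟨h1, h1'⟩, h2⟩
    exact ⟨h1, by omega⟩
  · rintro ⟨h1, h2⟩
    have h3 := h1 n (le_refl n)
    exact ⟨⟨h1, by omega⟩, by omega⟩

lemma snoc_true_mem_Dk_iff {n k : ℕ} (s : Fin n → Bool) :
    Fin.snoc s true ∈ Dk (n + 1) k ↔ 1 ≤ k ∧ s ∈ Dk n (k - 1) := by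
  simp only [Dk, Finset.mem_filter, Finset.mem_univ, true_and]
  rw [okP_snoc_iff, pathHt_ex_snoc_top]
  have hif : (if (true : Bool) then (1 : ℤ) else -1) = 1 := rfl
  rw [hif]
  constructor
  · rintro ⟨⟨h1, h1'⟩, h2⟩
    have h3 := h1 n (le_refl n)
    exact ⟨by omega, h1, by omega⟩
  · rintro ⟨hk, h1, h2⟩
    exact ⟨⟨h1, by omega⟩, by omega⟩

lemma snoc_injective {n : ℕ} (b : Bool) :
    Function.Injective (fun s : Fin n → Bool => (Fin.snoc s b : Fin (n + 1) → Bool)) := by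
  intro s t h
  have := congrArg Fin.init h
  simpa [Fin.init_snoc] using this

lemma Dk_succ_zero (n : ℕ) :
    Dk (n + 1) 0 = (Dk n 1).image (fun s => Fin.snoc s false) := by
  ext t
  constructor
  · intro ht
    rw [← Fin.snoc_init_self t] at ht ⊢
    rcases hb : t (Fin.last n) with _ | _
    · rw [hb, snoc_false_mem_Dk_iff] at ht
      exact Finset.mem_image_of_mem _ ht
    · rw [hb, snoc_true_mem_Dk_iff] at ht
      exact absurd ht.1 (by omega)
  · intro ht
    obtain ⟨s, hs, rfl⟩ := Finset.mem_image.mp ht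
    exact (snoc_false_mem_Dk_iff s).mpr hs

lemma Dk_succ_succ (n k : ℕ) :
    Dk (n + 1) (k + 1) =
      (Dk n (k + 2)).image (fun s => Fin.snoc s false) ∪
      (Dk n k).image (fun s => Fin.snoc s true) := by
  ext t
  rw [Finset.mem_union]
  constructor
  · intro ht
    rw [← Fin.snoc_init_self t] at ht ⊢
    rcases hb : t (Fin.last n) with _ | _
    · rw [hb, snoc_false_mem_Dk_iff] at ht
      exact Or.inl (Finset.mem_image_of_mem _ ht)
    · rw [hb, snoc_true_mem_Dk_iff] at ht
      refine Or.inr (Finset.mem_image_of_mem _ ?_)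
      simpa using ht.2
  · rintro (ht | ht) <;> obtain ⟨s, hs, rfl⟩ := Finset.mem_image.mp ht
    · exact (snoc_false_mem_Dk_iff s).mpr hs
    · refine (snoc_true_mem_Dk_iff s).mpr ⟨by omega, by simpa using hs⟩

lemma card_Dk : ∀ n k : ℕ, ((Dk n k).card : ℤ) = c n k := by
  intro n
  induction n with
  | zero =>
    intro k
    have hx : ∀ s : Fin 0 → Bool, pathHt (ex s) 0 = 0 := fun _ => rfl
    rcases k with _ | k
    · have : Dk 0 0 = Finset.univ := by
        ext s
        simp only [Dk, Finset.mem_filter, Finset.mem_univ, true_and, iff_true]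
        exact ⟨fun j hj => by interval_cases j; simp [hx], by simp [hx]⟩
      rw [this]
      simp only [c, g]
      norm_num
    · have : Dk 0 (k + 1) = ∅ := by
        ext s
        simp only [Dk, Finset.mem_filter, Finset.mem_univ, true_and,
          Finset.notMem_empty, iff_false]
        rintro ⟨_, h⟩
        rw [hx] at h
        omega
      rw [this]
      simp only [c, g]
      have h1 : ¬ (2 ∣ (0 - (k + 1)) ∧ k + 1 ≤ 0) := by omega
      have h2 : ¬ (2 ∣ (0 - (k + 1 + 2)) ∧ k + 1 + 2 ≤ 0) := by omega
      rw [if_neg h1, if_neg h2]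
      simp
  | succ n ih =>
    intro k
    rcases k with _ | k
    · rw [Dk_succ_zero, Finset.card_image_of_injective _ (snoc_injective false),
        c_succ_zero]
      exact ih 1
    · rw [Dk_succ_succ, Finset.card_union_of_disjoint, Finset.card_image_of_injective _
        (snoc_injective false), Finset.card_image_of_injective _ (snoc_injective true),
        c_succ_succ]
      · push_cast [ih]
        ring
      · rw [Finset.disjoint_left]
        rintro t ht1 ht2
        obtain ⟨s1, _, rfl⟩ := Finset.mem_image.mp ht1
        obtain ⟨s2, _, he⟩ := Finset.mem_image.mp ht2
        have := congrFun he (Fin.last n)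
        simp [Fin.snoc_last] at this

lemma Tot_eq_biUnion (n : ℕ) :
    Tot n = (Finset.range (n + 1)).biUnion (fun k => Dk n k) := by
  ext s
  simp only [Tot, Dk, Finset.mem_filter, Finset.mem_univ, true_and, Finset.mem_biUnion,
    Finset.mem_range]
  constructor
  · intro h
    refine ⟨(pathHt (ex s) n).toNat, ?_, h, ?_⟩
    · have h1 := pathHt_le (ex s) n
      have h2 := h n (le_refl n)
      omega
    · have h2 := h n (le_refl n)
      omega
  · rintro ⟨k, _, h, _⟩
    exact h

lemma sum_telescope (u : ℕ → ℤ) : ∀ N : ℕ,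
    ∑ k ∈ Finset.range N, (u k - u (k + 2)) = u 0 + u 1 - u N - u (N + 1)
  | 0 => by simp
  | 1 => by simp
  | (N + 2) => by
      rw [Finset.sum_range_succ, sum_telescope u (N + 1)]
      ring

lemma card_Tot (n : ℕ) : (Tot n).card = n.choose (n / 2) := by
  have hdisj : ∀ x ∈ Finset.range (n + 1), ∀ y ∈ Finset.range (n + 1), x ≠ y →
      Disjoint (Dk n x) (Dk n y) := by
    intro x _ y _ hxy
    rw [Finset.disjoint_left]
    rintro s hs1 hs2
    simp only [Dk, Finset.mem_filter] at hs1 hs2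
    have := hs1.2.2
    rw [hs2.2.2] at this
    exact hxy (by exact_mod_cast this.symm)
  have hcast : ((Tot n).card : ℤ) = ∑ k ∈ Finset.range (n + 1), ((Dk n k).card : ℤ) := by
    rw [Tot_eq_biUnion, Finset.card_biUnion hdisj]
    push_cast
    rfl
  have : ((Tot n).card : ℤ) = ∑ k ∈ Finset.range (n + 1), c n k := by
    rw [hcast]
    exact Finset.sum_congr rfl (fun k _ => card_Dk n k)
  rw [show (∑ k ∈ Finset.range (n + 1), c n k) =
      ∑ k ∈ Finset.range (n + 1), ((g n k : ℤ) - (g n (k + 2) : ℤ)) from rfl,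
    sum_telescope] at this
  have hz1 : g n (n + 1) = 0 := by unfold g; rw [if_neg (by omega)]
  have hz2 : g n (n + 2) = 0 := by unfold g; rw [if_neg (by omega)]
  rw [hz1, hz2] at this
  have hfin : g n 0 + g n 1 = n.choose (n / 2) := by
    rcases Nat.even_or_odd n with ⟨m, rfl⟩ | ⟨m, rfl⟩
    · have h0 : 2 ∣ (m + m - 0) ∧ 0 ≤ m + m := by omega
      have h1 : ¬ (2 ∣ (m + m - 1) ∧ 1 ≤ m + m) := by omega
      unfold g
      rw [if_pos h0, if_neg h1]
      have e : (m + m - 0) / 2 = (m + m) / 2 := by omega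
      rw [e]
      omega
    · have h0 : ¬ (2 ∣ (2 * m + 1 - 0) ∧ 0 ≤ 2 * m + 1) := by omega
      have h1 : 2 ∣ (2 * m + 1 - 1) ∧ 1 ≤ 2 * m + 1 := by omega
      unfold g
      rw [if_neg h0, if_pos h1]
      have e : (2 * m + 1 - 1) / 2 = (2 * m + 1) / 2 := by omega
      rw [e]
      omega
  omega


section OscVac

variable {n : ℕ}

lemma osc_parity {μ : Fin (2 * n + 1) → ℕ} (h : IsPalOscTab n μ) :
    ∀ j : ℕ, (hj : j < 2 * n + 1) → μ ⟨j, hj⟩ % 2 = j % 2 := by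
  intro j
  induction j with
  | zero =>
    intro hj
    have h0 := h.1
    omega
  | succ j ih =>
    intro hj
    have hstep := h.2.2.1 j (by omega)
    have h2 := ih (by omega)
    omega

lemma oscToVac {μ : Fin (2 * n + 1) → ℕ} (h : IsPalOscTab n μ) :
    IsPalVacTab n (fun i => μ i / 2) := by
  obtain ⟨h0, hN, hstep, hpal⟩ := h
  refine ⟨?_, ?_, ?_, ?_⟩
  · show μ ⟨0, by omega⟩ / 2 = 0
    omega
  · show μ ⟨2 * n, by omega⟩ / 2 = 0
    omega
  · intro j hj
    have hp1 := osc_parity ⟨h0, hN, hstep, hpal⟩ j (by omega)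
    have hp2 := osc_parity ⟨h0, hN, hstep, hpal⟩ (j + 1) (by omega)
    have hs := hstep j hj
    rcases Nat.even_or_odd j with he | ho
    · rw [if_pos he]
      have hj2 : j % 2 = 0 := Nat.even_iff.mp he
      show μ ⟨j + 1, by omega⟩ / 2 = μ ⟨j, by omega⟩ / 2 ∨
        μ ⟨j + 1, by omega⟩ / 2 + 1 = μ ⟨j, by omega⟩ / 2
      omega
    · rw [if_neg (Nat.not_even_iff_odd.mpr ho)]
      have hj2 : j % 2 = 1 := Nat.odd_iff.mp ho
      show μ ⟨j + 1, by omega⟩ / 2 = μ ⟨j, by omega⟩ / 2 ∨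
        μ ⟨j + 1, by omega⟩ / 2 = μ ⟨j, by omega⟩ / 2 + 1
      omega
  · intro j hj
    have := hpal j hj
    show μ ⟨j, by omega⟩ / 2 = μ ⟨2 * n - j, by omega⟩ / 2
    omega

lemma vacToOsc {ν : Fin (2 * n + 1) → ℕ} (h : IsPalVacTab n ν) :
    IsPalOscTab n (fun i => 2 * ν i + i.val % 2) := by
  obtain ⟨h0, hN, hstep, hpal⟩ := h
  refine ⟨?_, ?_, ?_, ?_⟩
  · show 2 * ν ⟨0, by omega⟩ + 0 % 2 = 0
    omega
  · show 2 * ν ⟨2 * n, by omega⟩ + (2 * n) % 2 = 0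
    omega
  · intro j hj
    have hs := hstep j hj
    show 2 * ν ⟨j + 1, by omega⟩ + (j + 1) % 2 = 2 * ν ⟨j, by omega⟩ + j % 2 + 1 ∨
      2 * ν ⟨j + 1, by omega⟩ + (j + 1) % 2 + 1 = 2 * ν ⟨j, by omega⟩ + j % 2
    rcases Nat.even_or_odd j with he | ho
    · rw [if_pos he] at hs
      have hj2 : j % 2 = 0 := Nat.even_iff.mp he
      omega
    · rw [if_neg (Nat.not_even_iff_odd.mpr ho)] at hs
      have hj2 : j % 2 = 1 := Nat.odd_iff.mp ho
      omega
  · intro j hj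
    have := hpal j hj
    show 2 * ν ⟨j, by omega⟩ + j % 2 = 2 * ν ⟨2 * n - j, by omega⟩ + (2 * n - j) % 2
    omega

noncomputable def oscVacEquiv (n : ℕ) :
    {μ : Fin (2 * n + 1) → ℕ // IsPalOscTab n μ} ≃
      {ν : Fin (2 * n + 1) → ℕ // IsPalVacTab n ν} where
  toFun p := ⟨fun i => p.1 i / 2, oscToVac p.2⟩
  invFun q := ⟨fun i => 2 * q.1 i + i.val % 2, vacToOsc q.2⟩
  left_inv p := by
    apply Subtype.ext
    funext i
    have hp := osc_parity p.2 i.val i.isLt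
    have he : (⟨i.val, i.isLt⟩ : Fin (2 * n + 1)) = i := Fin.eta i i.isLt
    rw [he] at hp
    show 2 * (p.1 i / 2) + i.val % 2 = p.1 i
    omega
  right_inv q := by
    apply Subtype.ext
    funext i
    show (2 * q.1 i + i.val % 2) / 2 = q.1 i
    omega

def stepsOf {n : ℕ} (μ : Fin (2 * n + 1) → ℕ) : Fin n → Bool :=
  fun i => decide (μ ⟨i.val + 1, by have := i.isLt; omega⟩ = μ ⟨i.val, by have := i.isLt; omega⟩ + 1)

lemma ex_stepsOf {n : ℕ} (μ : Fin (2 * n + 1) → ℕ) {j : ℕ} (hj : j < n) :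
    ex (stepsOf μ) j
      = decide (μ ⟨j + 1, by omega⟩ = μ ⟨j, by omega⟩ + 1) := by
  unfold ex stepsOf
  rw [dif_pos hj]

lemma pathHt_stepsOf {μ : Fin (2 * n + 1) → ℕ} (h : IsPalOscTab n μ) :
    ∀ j : ℕ, (hj : j ≤ n) → pathHt (ex (stepsOf μ)) j = (μ ⟨j, by omega⟩ : ℤ) := by
  intro j
  induction j with
  | zero =>
    intro _
    have h0 := h.1
    show (0 : ℤ) = _
    omega
  | succ j ih =>
    intro hj
    have hstep := h.2.2.1 j (by omega)
    have hih := ih (by omega)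
    show pathHt (ex (stepsOf μ)) j + (if ex (stepsOf μ) j then 1 else -1) = _
    rw [ex_stepsOf μ (by omega : j < n)]
    rcases hstep with hup | hdown
    · rw [decide_eq_true (by exact hup)]
      simp only [if_pos]
      omega
    · rw [decide_eq_false (by omega)]
      simp only [Bool.false_eq_true, if_neg, not_false_iff]
      omega

lemma okP_stepsOf {μ : Fin (2 * n + 1) → ℕ} (h : IsPalOscTab n μ) :
    OkP n (ex (stepsOf μ)) := by
  intro j hj
  rw [pathHt_stepsOf h j hj]
  positivity

lemma okToOsc (s : Fin n → Bool) (hs : OkP n (ex s)) :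
    IsPalOscTab n (fun i => (pathHt (ex s) (min i.val (2 * n - i.val))).toNat) := by
  refine ⟨?_, ?_, ?_, ?_⟩
  · show (pathHt (ex s) (min 0 (2 * n - 0))).toNat = 0
    rw [Nat.min_eq_left (by omega)]
    rfl
  · show (pathHt (ex s) (min (2 * n) (2 * n - 2 * n))).toNat = 0
    rw [Nat.min_eq_right (by omega)]
    have : 2 * n - 2 * n = 0 := by omega
    rw [this]
    rfl
  · intro j hj
    show (pathHt (ex s) (min (j + 1) (2 * n - (j + 1)))).toNat
        = (pathHt (ex s) (min j (2 * n - j))).toNat + 1 ∨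
      (pathHt (ex s) (min (j + 1) (2 * n - (j + 1)))).toNat + 1
        = (pathHt (ex s) (min j (2 * n - j))).toNat
    rcases Nat.lt_or_ge j n with hc | hc
    · have e1 : min j (2 * n - j) = j := by omega
      have e2 : min (j + 1) (2 * n - (j + 1)) = j + 1 := by omega
      rw [e1, e2]
      have hstep : pathHt (ex s) (j + 1)
          = pathHt (ex s) j + (if ex s j then 1 else -1) := rfl
      have hn1 := hs j (by omega)
      have hn2 := hs (j + 1) (by omega)
      rcases hb : ex s j with _ | _ <;> rw [hb] at hstep <;>
        simp only [Bool.false_eq_true, if_neg, not_false_iff, if_pos] at hstep <;> omega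
    · have e1 : min j (2 * n - j) = 2 * n - j := by omega
      have e2 : min (j + 1) (2 * n - (j + 1)) = 2 * n - j - 1 := by omega
      rw [e1, e2]
      have ha1 : 1 ≤ 2 * n - j := by omega
      have ha2 : 2 * n - j ≤ n := by omega
      have e3 : 2 * n - j - 1 + 1 = 2 * n - j := by omega
      have hstep : pathHt (ex s) (2 * n - j - 1 + 1)
          = pathHt (ex s) (2 * n - j - 1) + (if ex s (2 * n - j - 1) then 1 else -1) := rfl
      rw [e3] at hstep
      have hn1 := hs (2 * n - j - 1) (by omega)
      have hn2 := hs (2 * n - j) (by omega)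
      rcases hb : ex s (2 * n - j - 1) with _ | _ <;> rw [hb] at hstep <;>
        simp only [Bool.false_eq_true, if_neg, not_false_iff, if_pos] at hstep <;> omega
  · intro j hj
    show (pathHt (ex s) (min j (2 * n - j))).toNat
        = (pathHt (ex s) (min (2 * n - j) (2 * n - (2 * n - j)))).toNat
    have e : min (2 * n - j) (2 * n - (2 * n - j)) = min j (2 * n - j) := by omega
    rw [e]

noncomputable def oscEquivOk (n : ℕ) :
    {μ : Fin (2 * n + 1) → ℕ // IsPalOscTab n μ} ≃ {s : Fin n → Bool // OkP n (ex s)} where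
  toFun p := ⟨stepsOf p.1, okP_stepsOf p.2⟩
  invFun q := ⟨fun i => (pathHt (ex q.1) (min i.val (2 * n - i.val))).toNat, okToOsc q.1 q.2⟩
  left_inv p := by
    apply Subtype.ext
    funext i
    obtain ⟨j, hj⟩ := i
    show (pathHt (ex (stepsOf p.1)) (min j (2 * n - j))).toNat = p.1 ⟨j, hj⟩
    rw [pathHt_stepsOf p.2 (min j (2 * n - j)) (by omega)]
    rcases le_or_gt j n with hc | hc
    · have e : (⟨min j (2 * n - j), by omega⟩ : Fin (2 * n + 1)) = ⟨j, hj⟩ := by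
        apply Fin.ext
        show min j (2 * n - j) = j
        omega
      rw [e, Int.toNat_natCast]
    · have hpal := p.2.2.2.2 j (by omega)
      have e : (⟨min j (2 * n - j), by omega⟩ : Fin (2 * n + 1))
          = ⟨2 * n - j, by omega⟩ := by
        apply Fin.ext
        show min j (2 * n - j) = 2 * n - j
        omega
      rw [e, Int.toNat_natCast]
      omega
  right_inv q := by
    apply Subtype.ext
    obtain ⟨t, ht⟩ := q
    funext i
    obtain ⟨j, hj⟩ := i
    show stepsOf (fun i : Fin (2 * n + 1) =>
        (pathHt (ex t) (min i.val (2 * n - i.val))).toNat) ⟨j, hj⟩ = t ⟨j, hj⟩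
    unfold stepsOf
    simp only
    have hstep : pathHt (ex t) (j + 1)
        = pathHt (ex t) j + (if ex t j then 1 else -1) := rfl
    have hexj : ex t j = t ⟨j, hj⟩ := by
      unfold ex
      rw [dif_pos hj]
    have hn1 := ht j (by omega)
    have hn2 := ht (j + 1) (by omega)
    rw [hexj] at hstep
    rcases hb : t ⟨j, hj⟩ with _ | _ <;> rw [hb] at hstep <;>
      simp only [Bool.false_eq_true, if_neg, not_false_iff, if_pos] at hstep
    · simp only [decide_eq_false_iff_not]
      rw [show min (j + 1) (2 * n - (j + 1)) = j + 1 from by omega,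
        show min j (2 * n - j) = j from by omega]
      omega
    · simp only [decide_eq_true_eq]
      rw [show min (j + 1) (2 * n - (j + 1)) = j + 1 from by omega,
        show min j (2 * n - j) = j from by omega]
      omega

lemma ncard_osc (n : ℕ) :
    {μ : Fin (2 * n + 1) → ℕ | IsPalOscTab n μ}.ncard = n.choose (n / 2) := by
  classical
  rw [← Nat.card_coe_set_eq]
  have h1 : Nat.card {μ : Fin (2 * n + 1) → ℕ | IsPalOscTab n μ}
      = Nat.card {s : Fin n → Bool // OkP n (ex s)} := Nat.card_congr (oscEquivOk n)
  rw [h1, Nat.card_eq_fintype_card, Fintype.card_subtype, ← card_Tot n]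
  have he : (Finset.filter (fun x => OkP n (ex x)) Finset.univ) = Tot n := by
    unfold Tot
    exact Finset.filter_congr_decidable _ _ _
  rw [he]

lemma ncard_vac (n : ℕ) :
    {ν : Fin (2 * n + 1) → ℕ | IsPalVacTab n ν}.ncard = n.choose (n / 2) := by
  rw [← Nat.card_coe_set_eq]
  have h1 : Nat.card {ν : Fin (2 * n + 1) → ℕ | IsPalVacTab n ν}
      = Nat.card {μ : Fin (2 * n + 1) → ℕ | IsPalOscTab n μ} :=
    Nat.card_congr (oscVacEquiv n).symm
  rw [h1, Nat.card_coe_set_eq]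
  exact ncard_osc n

end OscVac

end Stmt5Aux

theorem stmt5 (n : ℕ) :
    Nonempty ({μ : Fin (2 * n + 1) → ℕ | IsPalOscTab n μ} ≃
        {ν : Fin (2 * n + 1) → ℕ | IsPalVacTab n ν}) ∧
    {μ : Fin (2 * n + 1) → ℕ | IsPalOscTab n μ}.ncard = n.choose (n / 2) ∧
    {ν : Fin (2 * n + 1) → ℕ | IsPalVacTab n ν}.ncard = n.choose (n / 2) := by
  exact ⟨⟨Stmt5Aux.oscVacEquiv n⟩, Stmt5Aux.ncard_osc n, Stmt5Aux.ncard_vac n⟩
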